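/- arXiv:2102.13005 — 2 statements merged into one kernel-verified Lean document; each statement's English description precedes it below -/
import Mathlib

section
/- Let T = {h ∈ S_n^m : maj(h) = 0}. Then T is a left transversal to the subgroup S_n (colored permutations with all colors zero) in S_n^m, and in the group ring, ∑_{g ∈ S_n^m} p^{maj(g)} q^{col(g)}·g = (∑_{h ∈ T} q^{col(h)}·h)(∑_{w ∈ S_n} p^{maj(w)}·w). -/
/-- The group `Sₙᵐ = Sₙ ⋉ (ℤ/mℤ)ⁿ` of `m`-colored permutations, with
`(g,x)(h,y) = (gh, x∘h + y)` where `(x∘h)_i = x_{h(i)}`. -/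
def ColoredPerm (n m : ℕ) : Type := Equiv.Perm (Fin n) × (Fin n → ZMod m)

namespace ColoredPerm

variable {n m : ℕ}

instance : Mul (ColoredPerm n m) := ⟨fun a b => (a.1 * b.1, a.2 ∘ ⇑b.1 + b.2)⟩
instance : One (ColoredPerm n m) := ⟨(1, 0)⟩
instance : Inv (ColoredPerm n m) := ⟨fun a => (a.1⁻¹, -(a.2 ∘ ⇑(a.1⁻¹)))⟩

theorem mul_def (a b : ColoredPerm n m) : a * b = (a.1 * b.1, a.2 ∘ ⇑b.1 + b.2) := rfl
theorem one_def : (1 : ColoredPerm n m) = ((1 : Equiv.Perm (Fin n)), 0) := rfl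
theorem inv_def (a : ColoredPerm n m) : a⁻¹ = (a.1⁻¹, -(a.2 ∘ ⇑(a.1⁻¹))) := rfl

instance : Group (ColoredPerm n m) where
  mul_assoc a b c := by
    rw [mul_def, mul_def, mul_def, mul_def]
    refine Prod.ext (mul_assoc _ _ _) ?_
    funext i
    simp [Function.comp, Equiv.Perm.mul_apply, add_assoc]
  one_mul a := by
    rw [mul_def, one_def]
    refine Prod.ext (one_mul _) ?_
    funext i
    simp
  mul_one a := by
    rw [mul_def, one_def]
    refine Prod.ext (mul_one _) ?_
    funext i
    simp
  inv_mul_cancel a := by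
    rw [mul_def, inv_def, one_def]
    refine Prod.ext (inv_mul_cancel _) ?_
    funext i
    simp [Function.comp]

instance [NeZero m] : Fintype (ColoredPerm n m) :=
  inferInstanceAs (Fintype (Equiv.Perm (Fin n) × (Fin n → ZMod m)))

instance : DecidableEq (ColoredPerm n m) :=
  inferInstanceAs (DecidableEq (Equiv.Perm (Fin n) × (Fin n → ZMod m)))

/-- total color -/
def col (g : ColoredPerm n m) : ℕ := ∑ i, (g.2 i).val

/-- major index of a colored permutation w.r.t. the order
`n > ⋯ > 1 > n̄ > ⋯ > 1̄ > n̿ > ⋯`: the letter at position `i` (value `w(i)` with `x_i`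
bars) is larger than the one at position `i+1` iff its color is smaller, or the colors
agree and its value is larger. -/
def cmaj (g : ColoredPerm n m) : ℕ :=
  ∑ i : Fin n, if h : i.1 + 1 < n then
    (if ((g.2 i).val < (g.2 ⟨i.1 + 1, h⟩).val ∨
        ((g.2 i).val = (g.2 ⟨i.1 + 1, h⟩).val ∧ g.1 ⟨i.1 + 1, h⟩ < g.1 i))
      then i.1 + 1 else 0) else 0

/-- flag major index -/
def fmaj (g : ColoredPerm n m) : ℕ := m * cmaj g + col g

/-- `t̃_{i+1} = (t_{i+1}, (1,0,…,0))` where `t_{i+1} = (i+1, i, …, 1)`. -/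
def ttil (i : Fin n) : ColoredPerm n m :=
  ((Fin.cycleRange i)⁻¹, fun j => if (j : ℕ) = 0 then 1 else 0)

end ColoredPerm

/-!
Order the letters of a colored permutation as in the definition of `cmaj`; then `cmaj h = 0`
exactly when the letters of `h` increase from left to right. Right multiplication by an
uncolored `w` permutes the positions of the letters, so it preserves `col`, and when the letters
of `h` increase, the descents of `h * w` are those of `w`. Sorting the letters of `g` gives the
unique factorization `g = h * w`, and the product formula is the sum over `g` regrouped along it.
-/

lemma Fin.strictMono_iff_lt_add_one {n : ℕ} {α : Type*} [Preorder α] {f : Fin n → α} :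
    StrictMono f ↔ ∀ (i : Fin n) (hi : i.1 + 1 < n), f i < f ⟨i.1 + 1, hi⟩ := by
  obtain _ | k := n
  · exact ⟨fun _ i => i.elim0, fun _ i => i.elim0⟩
  · rw [Fin.strictMono_iff_lt_succ]
    exact ⟨fun h i hi => h ⟨i, by omega⟩, fun h i => h i.castSucc (by simp)⟩

namespace ColoredPerm

variable {n m : ℕ}

/-- The letter at position `i`, in the order `n > ⋯ > 1 > n̄ > ⋯ > 1̄ > ⋯` used by `cmaj`. -/
def key (g : ColoredPerm n m) (i : Fin n) : ℕᵒᵈ ×ₗ Fin n :=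
  toLex (OrderDual.toDual (g.2 i).val, g.1 i)

lemma key_injective (g : ColoredPerm n m) : Function.Injective (key g) :=
  fun _ _ h => g.1.injective (congrArg (fun p => (ofLex p).2) h)

lemma isDescent_iff_key_lt {g : ColoredPerm n m} {i j : Fin n} :
    ((g.2 i).val < (g.2 j).val ∨ ((g.2 i).val = (g.2 j).val ∧ g.1 j < g.1 i)) ↔
      key g j < key g i := by
  simp only [key, Prod.Lex.toLex_lt_toLex, OrderDual.toDual_lt_toDual, OrderDual.toDual_inj,
    eq_comm]

lemma cmaj_eq_sum_key (g : ColoredPerm n m) :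
    cmaj g = ∑ i : Fin n, if h : i.1 + 1 < n then
      (if key g ⟨i.1 + 1, h⟩ < key g i then i.1 + 1 else 0) else 0 := by
  simp only [cmaj, isDescent_iff_key_lt]

lemma cmaj_eq_zero_iff {g : ColoredPerm n m} : cmaj g = 0 ↔ StrictMono (key g) := by
  simp only [cmaj_eq_sum_key, Finset.sum_eq_zero_iff, Finset.mem_univ, true_implies,
    Fin.strictMono_iff_lt_add_one]
  refine forall_congr' fun i => ?_
  by_cases hi : i.1 + 1 < n
  · have hne : key g i ≠ key g ⟨i.1 + 1, hi⟩ :=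
      (key_injective g).ne (Fin.ne_of_val_ne (by simp))
    simp [hi, hne.le_iff_lt]
  · simp [hi]

lemma cmaj_congr {g g' : ColoredPerm n m}
    (h : ∀ i j, key g i < key g j ↔ key g' i < key g' j) : cmaj g = cmaj g' := by
  simp only [cmaj_eq_sum_key, h]

lemma key_mul {g w : ColoredPerm n m} (hw : w.2 = 0) : key (g * w) = key g ∘ w.1 := by
  funext i
  simp [key, mul_def, hw]

lemma key_lt_key_iff {w : ColoredPerm n m} (hw : w.2 = 0) {i j : Fin n} :
    key w i < key w j ↔ w.1 i < w.1 j := by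
  simp [key, hw, Prod.Lex.toLex_lt_toLex]

lemma col_mul {g w : ColoredPerm n m} (hw : w.2 = 0) : col (g * w) = col g := by
  simpa [col, mul_def, hw] using Equiv.sum_comp w.1 fun i => (g.2 i).val

lemma cmaj_mul {h w : ColoredPerm n m} (hh : cmaj h = 0) (hw : w.2 = 0) :
    cmaj (h * w) = cmaj w :=
  cmaj_congr fun i j => by
    rw [key_mul hw, key_lt_key_iff hw]
    exact (cmaj_eq_zero_iff.mp hh).lt_iff_lt

def sortPerm (g : ColoredPerm n m) : ColoredPerm n m := (Tuple.sort (key g), 0)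

lemma inv_snd_eq_zero {w : ColoredPerm n m} (hw : w.2 = 0) : (w⁻¹).2 = 0 := by
  simp [inv_def, hw]

lemma cmaj_mul_sortPerm (g : ColoredPerm n m) : cmaj (g * sortPerm g) = 0 := by
  rw [cmaj_eq_zero_iff, key_mul (g := g) (w := sortPerm g) rfl]
  exact (Tuple.monotone_sort (key g)).strictMono_of_injective
    ((key_injective g).comp (Tuple.sort (key g)).injective)

lemma sortPerm_mul {h w : ColoredPerm n m} (hh : cmaj h = 0) (hw : w.2 = 0) :
    sortPerm (h * w) = w⁻¹ := by
  have hsort : w.1⁻¹ = Tuple.sort (key (h * w)) := by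
    refine Tuple.eq_sort_iff.mpr ⟨?_, fun i j hij he => absurd ((key_injective _) he) ?_⟩
    · rw [key_mul hw]
      simpa [Function.comp_def] using (cmaj_eq_zero_iff.mp hh).monotone
    · simpa using hij.ne
  exact Prod.ext hsort.symm (inv_snd_eq_zero hw).symm

theorem existsUnique_cmaj_eq_zero_mul (g : ColoredPerm n m) :
    ∃! p : ColoredPerm n m × ColoredPerm n m, cmaj p.1 = 0 ∧ p.2.2 = 0 ∧ g = p.1 * p.2 := by
  refine ⟨(g * sortPerm g, (sortPerm g)⁻¹), ⟨cmaj_mul_sortPerm g, ?_, by group⟩, ?_⟩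
  · exact inv_snd_eq_zero rfl
  · rintro ⟨h, w⟩ ⟨hh, hw, rfl⟩
    rw [sortPerm_mul hh hw, inv_inv, mul_inv_cancel_right]

end ColoredPerm

theorem MonoidAlgebra.sum_single_eq_mul_of_existsUnique_mul {k G : Type*} [Semiring k]
    [Monoid G] [Fintype G] [DecidableEq G] (T W : G → Prop) [DecidablePred T] [DecidablePred W]
    (hfac : ∀ g, ∃! p : G × G, T p.1 ∧ W p.2 ∧ g = p.1 * p.2) (f a b : G → k)
    (hf : ∀ h w, T h → W w → f (h * w) = a h * b w) :
    ∑ g, single g (f g) =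
      (∑ h, if T h then single h (a h) else 0) * (∑ w, if W w then single w (b w) else 0) := by
  symm
  calc _ = ∑ p : G × G, if T p.1 ∧ W p.2 then single (p.1 * p.2) (f (p.1 * p.2)) else 0 := by
        rw [Finset.sum_mul_sum, ← Finset.univ_product_univ, Finset.sum_product]
        refine Finset.sum_congr rfl fun h _ => Finset.sum_congr rfl fun w _ => ?_
        by_cases hh : T h <;> by_cases hw : W w <;> simp [hh, hw, single_mul_single, hf]
    _ = ∑ p ∈ Finset.univ.filter fun p : G × G => T p.1 ∧ W p.2,
          single (p.1 * p.2) (f (p.1 * p.2)) :=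
        (Finset.sum_filter _ _).symm
    _ = ∑ g, single g (f g) := by
        refine Finset.sum_bij (fun p _ => p.1 * p.2) (fun _ _ => Finset.mem_univ _) ?_ ?_
          fun _ _ => rfl
        · intro p hp q hq hpq
          simp only [Finset.mem_filter, Finset.mem_univ, true_and] at hp hq
          exact (hfac _).unique ⟨hp.1, hp.2, rfl⟩ ⟨hq.1, hq.2, hpq⟩
        · intro g _
          obtain ⟨p, ⟨hp₁, hp₂, rfl⟩, -⟩ := hfac g
          exact ⟨p, by simp [hp₁, hp₂], rfl⟩

open ColoredPerm MvPolynomial in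
theorem stmt16_general (n m : ℕ) [NeZero m] :
    (∀ g : ColoredPerm n m, ∃! p : ColoredPerm n m × ColoredPerm n m,
      cmaj p.1 = 0 ∧ p.2.2 = 0 ∧ g = p.1 * p.2) ∧
    (∑ g : ColoredPerm n m,
        MonoidAlgebra.single g
          ((X 0 : MvPolynomial (Fin 2) ℚ) ^ cmaj g * (X 1 : MvPolynomial (Fin 2) ℚ) ^ col g)) =
      (∑ h : ColoredPerm n m,
          if cmaj h = 0 then
            MonoidAlgebra.single h ((X 1 : MvPolynomial (Fin 2) ℚ) ^ col h) else 0) *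
      (∑ w : ColoredPerm n m,
          if w.2 = 0 then
            MonoidAlgebra.single w ((X 0 : MvPolynomial (Fin 2) ℚ) ^ cmaj w) else 0) :=
  ⟨existsUnique_cmaj_eq_zero_mul, MonoidAlgebra.sum_single_eq_mul_of_existsUnique_mul _ _
    existsUnique_cmaj_eq_zero_mul _ _ _
    fun _ _ hh hw => by rw [cmaj_mul hh hw, col_mul hw, mul_comm]⟩

open ColoredPerm MvPolynomial in
/-- `T = {h ∈ Sₙᵐ : maj(h) = 0}` is a left transversal to the subgroup
`Sₙ` (colored permutations with all colors zero) in `Sₙᵐ`, and in the group ring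
`∑_g p^{maj g} q^{col g}·g = (∑_{h ∈ T} q^{col h}·h)(∑_{w ∈ Sₙ} p^{maj w}·w)`. -/
theorem stmt16 (n m : ℕ) (hn : 1 ≤ n) (hm : 1 ≤ m) [NeZero m] :
    (∀ g : ColoredPerm n m, ∃! p : ColoredPerm n m × ColoredPerm n m,
      cmaj p.1 = 0 ∧ p.2.2 = 0 ∧ g = p.1 * p.2) ∧
    (∑ g : ColoredPerm n m,
        MonoidAlgebra.single g
          ((X 0 : MvPolynomial (Fin 2) ℚ) ^ cmaj g * (X 1 : MvPolynomial (Fin 2) ℚ) ^ col g)) =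
      (∑ h : ColoredPerm n m,
          if cmaj h = 0 then
            MonoidAlgebra.single h ((X 1 : MvPolynomial (Fin 2) ℚ) ^ col h) else 0) *
      (∑ w : ColoredPerm n m,
          if w.2 = 0 then
            MonoidAlgebra.single w ((X 0 : MvPolynomial (Fin 2) ℚ) ^ cmaj w) else 0) :=
  stmt16_general n m
end

section
/- For all m, n ≥ 1, det( p^{amaj(g h^{-1})} q^{col(g h^{-1})} )_{g,h ∈ S_n^m} = (1 − q^m)^{n! m^{n−1}(m−1) n} · ∏_{k=2}^n (1 − p^k)^{n! m^n (k−1)/k}, where for a colored permutation g = (w,x), amaj(g) = maj(w) is the major index of the underlying (uncolored) permutation and col(g) = ∑_i |x_i|. -/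
/-- The (ordinary) major index of a permutation. -/
def pmaj {n : ℕ} (w : Equiv.Perm (Fin n)) : ℕ :=
  ∑ i : Fin n, if h : i.1 + 1 < n then
    (if w ⟨i.1 + 1, h⟩ < w i then i.1 + 1 else 0) else 0

/-!
Writing a colored permutation as a pair `(w, x)`, the matrix is the Kronecker product of the matrix
`p ^ maj (w v⁻¹)` on `Sₙ` and the matrix `∏ᵢ q ^ |xᵢ - yᵢ|` on `(ℤ/m)ⁿ`. The latter is the `n`-th
Kronecker power of an `m × m` circulant matrix, of determinant `(1 - q ^ m) ^ (m - 1)`.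

For the former, every `w ∈ Sₙ₊₁` factors uniquely as `w = cᵃ u`, where `c` is the cyclic shift of
values `x ↦ x - 1`, `0 ≤ a ≤ n` and `u` fixes the last letter; then `maj w = a + maj u`. So the
group matrix of `p ^ maj` on `Sₙ₊₁` is the product of the group matrices of `p ^ a` on `⟨c⟩` and of
`p ^ maj` on `Sₙ`, each extended by zero. The group matrix of a function supported on a subgroup is
block diagonal along the cosets, so the determinant `Dₙ` of the group matrix of `p ^ maj` on `Sₙ`
satisfies `Dₙ₊₁ = ((1 - p ^ (n + 1)) ^ n) ^ n! * Dₙ ^ (n + 1)`.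
-/

section GroupMatrix

open Matrix Function

variable {G K K₁ K₂ R : Type*} [Group G]

def groupMatrix (f : G → R) : Matrix G G R := of fun g h => f (g⁻¹ * h)

@[simp] lemma groupMatrix_apply (f : G → R) (g h : G) : groupMatrix f g h = f (g⁻¹ * h) := rfl

lemma MonoidHom.index_range_mul_card [Group K] {φ : K →* G} (hφ : Injective φ) :
    φ.range.index * Nat.card K = Nat.card G := by
  rw [Nat.card_congr (MonoidHom.ofInjective hφ).toEquiv, Subgroup.index_mul_card]

variable [CommRing R]

theorem det_of_mul_inv [Fintype G] [DecidableEq G] (f : G → R) :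
    det (of fun g h : G => f (g * h⁻¹)) = det (groupMatrix f) := by
  rw [← det_submatrix_equiv_self (Equiv.inv G)]
  congr 1
  ext g h
  simp

omit [Group G] in
lemma sum_extend_zero_mul [Fintype G] [Fintype K] {φ : K → G} (hφ : Injective φ) (c : K → R)
    (F : G → R) : ∑ z, extend φ c 0 z * F z = ∑ k, c k * F (φ k) := by
  classical
  rw [← Finset.sum_subset (Finset.subset_univ (Finset.univ.image φ)), Finset.sum_image hφ.injOn]
  · simp only [hφ.extend_apply]
  · intro z _ hz
    rw [extend_apply' _ _ _ (by simpa using hz), Pi.zero_apply, zero_mul]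

theorem groupMatrix_eq_mul_of_bijective [Fintype G] [Group K₁] [Group K₂] [Fintype K₁]
    {φ₁ : K₁ →* G} {φ₂ : K₂ →* G} (hφ : Bijective fun k : K₁ × K₂ => φ₁ k.1 * φ₂ k.2)
    (c₁ : K₁ → R) (c₂ : K₂ → R) {f : G → R} (hf : ∀ k₁ k₂, f (φ₁ k₁ * φ₂ k₂) = c₁ k₁ * c₂ k₂) :
    groupMatrix f = groupMatrix (extend φ₁ c₁ 0) * groupMatrix (extend φ₂ c₂ 0) := by
  have hφ₁ : Injective φ₁ := fun k k' h => congrArg Prod.fst (@hφ.1 (k, 1) (k', 1) (by simp [h]))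
  have hφ₂ : Injective φ₂ := fun l l' h => congrArg Prod.snd (@hφ.1 (1, l) (1, l') (by simp [h]))
  ext g h
  obtain ⟨⟨a, b⟩, hab⟩ := hφ.2 (g⁻¹ * h)
  rw [mul_apply, ← Equiv.sum_comp (Equiv.mulLeft g)]
  simp only [groupMatrix_apply, Equiv.coe_mulLeft, inv_mul_cancel_left, _root_.mul_inv_rev,
    mul_assoc]
  rw [sum_extend_zero_mul hφ₁, ← hab, Finset.sum_eq_single a, hf]
  · simp [← mul_assoc, hφ₂.extend_apply]
  · intro k _ hk
    rw [extend_apply', Pi.zero_apply, mul_zero]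
    rintro ⟨l, hl⟩
    have := @hφ.1 (k, l) (a, b) (by simp [hl, mul_inv_cancel_left])
    exact hk (congrArg Prod.fst this)
  · simp

open Kronecker in
theorem det_groupMatrix_extend [Fintype G] [DecidableEq G] [Group K] [Fintype K] [DecidableEq K]
    {φ : K →* G} (hφ : Injective φ) (c : K → R) :
    det (groupMatrix (extend φ c 0)) = det (groupMatrix c) ^ φ.range.index := by
  classical
  let e : (G ⧸ φ.range) × K ≃ G := Equiv.ofBijective (fun x => x.1.out * φ x.2) <| by
    refine (Fintype.bijective_iff_injective_and_card _).2 ⟨?_, ?_⟩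
    · rintro ⟨q, k⟩ ⟨q', k'⟩ h
      have hq : q = q' := by
        simpa using congrArg (fun g : G => (g : G ⧸ φ.range)) h
      subst hq
      simpa using hφ (mul_left_cancel h)
    · rw [← Nat.card_eq_fintype_card, ← Nat.card_eq_fintype_card, Nat.card_prod,
        ← Subgroup.index, MonoidHom.index_range_mul_card hφ]
  have hblock :
      (groupMatrix (extend φ c 0)).submatrix e e = (1 : Matrix _ _ R) ⊗ₖ groupMatrix c := by
    ext ⟨q, k⟩ ⟨q', k'⟩
    simp only [submatrix_apply, groupMatrix_apply, kroneckerMap_apply, one_apply, e,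
      Equiv.ofBijective_apply, _root_.mul_inv_rev, mul_assoc]
    by_cases hq : q = q'
    · subst hq
      simp [← map_inv, ← map_mul, hφ.extend_apply]
    · rw [extend_apply', if_neg hq, zero_mul, Pi.zero_apply]
      rintro ⟨l, hl⟩
      apply hq
      rw [← q.out_eq', ← q'.out_eq', QuotientGroup.eq]
      exact ⟨k * l * k'⁻¹, by rw [map_mul, map_mul, hl, map_inv]; group⟩
  rw [← det_submatrix_equiv_self e, hblock, det_kronecker, det_one, one_pow, one_mul,
    Subgroup.index, Nat.card_eq_fintype_card]

end GroupMatrix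

section Circulant

open Matrix

variable {R : Type*} [CommRing R]

lemma mul_pow_val_sub_one {k : ℕ} (q : R) (x : Fin (k + 1)) :
    q * q ^ ((x - 1 : Fin (k + 1)) : ℕ) = if x = 0 then q ^ (k + 1) else q ^ (x : ℕ) := by
  rw [Fin.coe_sub_one]
  split_ifs with hx
  · rw [pow_succ']
  · rw [← pow_succ', Nat.sub_add_cancel (Nat.one_le_iff_ne_zero.2 (Fin.val_ne_zero_iff.2 hx))]

theorem det_circulant_pow_val (k : ℕ) (q : R) :
    det (circulant fun a : Fin (k + 1) => q ^ (a : ℕ)) = (1 - q ^ (k + 1)) ^ k := by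
  set C := circulant fun a : Fin (k + 1) => q ^ (a : ℕ)
  let S : Matrix (Fin (k + 1)) (Fin (k + 1)) R := of fun i j => if (j : ℕ) + 1 = i then 1 else 0
  let D : Matrix (Fin (k + 1)) (Fin (k + 1)) R :=
    of fun i j => if i = 0 then C 0 j else if i = j then 1 - q ^ (k + 1) else 0
  have hSC : ∀ i j, (S * C) i j = if i = 0 then 0 else C (i - 1) j := by
    intro i j
    rw [mul_apply]
    split_ifs with hi
    · refine Finset.sum_eq_zero fun l _ => ?_
      simp [S, hi]
    · rw [Finset.sum_eq_single (i - 1)]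
      · simp [S, Fin.val_sub_one_of_ne_zero hi, Nat.sub_add_cancel
          (Nat.one_le_iff_ne_zero.2 (Fin.val_ne_zero_iff.2 hi))]
      · intro l _ hl
        have : (l : ℕ) + 1 ≠ i := fun h => hl (by ext; rw [Fin.val_sub_one_of_ne_zero hi]; omega)
        simp [S, this]
      · simp
  -- subtracting `q` times row `i - 1` from each row `i ≠ 0` makes `C` upper triangular
  have hTC : (1 - q • S) * C = D := by
    ext i j
    rw [sub_mul, one_mul, Matrix.sub_apply, smul_mul, Matrix.smul_apply, hSC, smul_eq_mul]
    simp only [D, C, of_apply, circulant_apply]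
    split_ifs with hi hij
    · simp [hi]
    · rw [hij, sub_right_comm, sub_self, mul_pow_val_sub_one, if_pos rfl]; simp
    · rw [sub_right_comm, mul_pow_val_sub_one, if_neg (sub_ne_zero.2 hij), sub_self]
  have hT : det (1 - q • S) = 1 := by
    rw [det_of_isLowerTriangular]
    · simp [S]
    · intro i j (hij : i < j)
      have : ¬ ((j : ℕ) + 1 = i) := by have := Fin.lt_def.1 hij; omega
      simp [S, this, one_apply_ne hij.ne]
  have hD : det D = (1 - q ^ (k + 1)) ^ k := by
    rw [det_of_isUpperTriangular, Fin.prod_univ_succ]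
    · simp [D, C, Fin.succ_ne_zero]
    · intro i j (hji : j < i)
      simp [D, Fin.ne_zero_of_lt hji, hji.ne']
  rw [← hD, ← hTC, det_mul, hT, one_mul]

theorem det_circulant_pow_zmod_val (m : ℕ) [NeZero m] (q : R) :
    det (circulant fun a : ZMod m => q ^ a.val) = (1 - q ^ m) ^ (m - 1) := by
  obtain ⟨k, rfl⟩ := Nat.exists_eq_succ_of_ne_zero (NeZero.ne m)
  -- `ZMod (k + 1)` is `Fin (k + 1)` by definition
  exact det_circulant_pow_val k q

end Circulant

open Kronecker Matrix in
theorem det_of_prod_apply_pi {R α : Type*} [CommRing R] [Fintype α] [DecidableEq α]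
    (A : Matrix α α R) (n : ℕ) :
    det (of fun x y : Fin n → α => ∏ i, A (x i) (y i)) =
      det A ^ (n * Fintype.card α ^ (n - 1)) := by
  induction n with
  | zero => simp
  | succ n ih =>
    have hcons : (of fun x y : Fin (n + 1) → α => ∏ i, A (x i) (y i)).submatrix
        (Fin.consEquiv _) (Fin.consEquiv _) =
          A ⊗ₖ of fun x y : Fin n → α => ∏ i, A (x i) (y i) := by
      ext ⟨a, x⟩ ⟨b, y⟩
      simp [Fin.prod_univ_succ, Fin.consEquiv]
    rw [← det_submatrix_equiv_self (Fin.consEquiv _), hcons, det_kronecker, ih, ← pow_mul,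
      ← pow_add, Fintype.card_fun, Fintype.card_fin]
    congr 1
    rcases n with _ | n
    · simp
    · rw [Nat.add_sub_cancel, Nat.add_sub_cancel, pow_succ]
      ring

section MajorIndex

open Matrix Function Equiv

variable {n : ℕ}

def cycleShift (n : ℕ) : Multiplicative (Fin (n + 1)) →* Perm (Fin (n + 1)) where
  toFun a := Equiv.subRight a.toAdd
  map_one' := by ext; simp
  map_mul' a b := by ext x; simp [sub_sub, add_comm]

@[simp] lemma cycleShift_apply (a : Multiplicative (Fin (n + 1))) (x : Fin (n + 1)) :
    cycleShift n a x = x - a.toAdd := rfl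

def castSuccPerm (n : ℕ) : Perm (Fin n) →* Perm (Fin (n + 1)) :=
  Perm.extendDomainHom (finSuccAboveEquiv (Fin.last n))

@[simp] lemma castSuccPerm_apply_castSucc (u : Perm (Fin n)) (i : Fin n) :
    castSuccPerm n u i.castSucc = (u i).castSucc := by
  have := Perm.extendDomain_apply_image u (finSuccAboveEquiv (Fin.last n)) i
  simp only [finSuccAboveEquiv_apply, Fin.succAbove_last] at this
  exact this

@[simp] lemma castSuccPerm_apply_last (u : Perm (Fin n)) :
    castSuccPerm n u (Fin.last n) = Fin.last n :=
  Perm.extendDomain_apply_not_subtype _ _ (by simp)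

lemma pmaj_eq_sum_succ (w : Perm (Fin (n + 1))) :
    pmaj w = ∑ i : Fin n, if w i.succ < w i.castSucc then (i : ℕ) + 1 else 0 := by
  rw [pmaj, Fin.sum_univ_castSucc, dif_neg (by simp), add_zero]
  refine Finset.sum_congr rfl fun i _ => ?_
  rw [dif_pos (by simp)]
  rfl

lemma pmaj_castSuccPerm (u : Perm (Fin n)) : pmaj (castSuccPerm n u) = pmaj u := by
  rcases n with _ | n
  · simp [pmaj]
  rw [pmaj_eq_sum_succ, pmaj_eq_sum_succ, Fin.sum_univ_castSucc, Fin.succ_last,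
    castSuccPerm_apply_last, castSuccPerm_apply_castSucc, if_neg (Fin.castSucc_lt_last _).not_gt,
    add_zero]
  refine Finset.sum_congr rfl fun i _ => ?_
  simp only [Fin.succ_castSucc, castSuccPerm_apply_castSucc, Fin.castSucc_lt_castSucc_iff,
    Fin.val_castSucc]

lemma ite_sub_one_lt_add_ite (a b : Fin (n + 1)) (c : ℕ) :
    (if b - 1 < a - 1 then c else 0) + (if b = 0 then c else 0) =
      (if b < a then c else 0) + (if a = 0 then c else 0) := by
  simp only [Fin.lt_def, Fin.coe_sub_one, ← Fin.val_eq_zero_iff]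
  have := a.isLt; have := b.isLt
  split_ifs <;> omega

lemma sum_ite_succ_eq (p : Fin (n + 1)) :
    ∑ i : Fin n, (if i.succ = p then (i : ℕ) + 1 else 0) = p := by
  cases p using Fin.cases with
  | zero => simp [Fin.succ_ne_zero]
  | succ j => simp [Fin.succ_inj]

lemma sum_ite_castSucc_eq (j : Fin n) :
    ∑ i : Fin n, (if i.castSucc = j.castSucc then (i : ℕ) + 1 else 0) = j + 1 := by
  simp [Fin.castSucc_inj]

lemma pmaj_cycleShift_one_mul (w : Perm (Fin (n + 1))) (hw : w (Fin.last n) ≠ 0) :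
    pmaj (cycleShift n (.ofAdd 1) * w) = pmaj w + 1 := by
  obtain ⟨j, hj⟩ : ∃ j : Fin n, j.castSucc = w⁻¹ 0 :=
    Fin.exists_castSucc_eq.2 fun h => hw (by simp [← h])
  -- the letter `0`, at position `j`, becomes the largest one: the descent into it (weight `j`, if
  -- any) is lost and the descent out of it (weight `j + 1`) is gained
  have key := Fintype.sum_congr _ _ fun i : Fin n =>
    ite_sub_one_lt_add_ite (w i.castSucc) (w i.succ) ((i : ℕ) + 1)
  simp only [Finset.sum_add_distrib, ← Perm.eq_inv_iff_eq, ← hj, sum_ite_succ_eq,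
    sum_ite_castSucc_eq, Fin.val_castSucc, ← pmaj_eq_sum_succ] at key
  rw [pmaj_eq_sum_succ]
  simp only [Perm.mul_apply, cycleShift_apply, toAdd_ofAdd]
  exact Nat.add_right_cancel (key.trans (by ring))

lemma pmaj_cycleShift_mul (w : Perm (Fin (n + 1))) (hw : w (Fin.last n) = Fin.last n)
    (a : Multiplicative (Fin (n + 1))) : pmaj (cycleShift n a * w) = a.toAdd + pmaj w := by
  suffices h : ∀ i : Fin (n + 1), pmaj (cycleShift n (.ofAdd i) * w) = i + pmaj w from h a.toAdd
  intro i
  induction i using Fin.induction with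
  | zero => simp
  | succ i ih =>
    have hne : (cycleShift n (.ofAdd i.castSucc) * w) (Fin.last n) ≠ 0 := by
      rw [Perm.mul_apply, hw, cycleShift_apply, toAdd_ofAdd, Ne, sub_eq_zero]
      exact (Fin.castSucc_lt_last i).ne'
    rw [Fin.val_succ, ← Fin.coeSucc_eq_succ, add_comm i.castSucc, ofAdd_add, map_mul, mul_assoc,
      pmaj_cycleShift_one_mul _ hne, ih, Fin.val_castSucc]
    ring

lemma cycleShift_injective : Injective (cycleShift n) := fun a b h => by
  simpa using congrArg (fun σ : Perm (Fin (n + 1)) => σ 0) h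

lemma castSuccPerm_injective : Injective (castSuccPerm n) :=
  Perm.extendDomainHom_injective _

lemma bijective_cycleShift_mul_castSuccPerm :
    Bijective fun k : Multiplicative (Fin (n + 1)) × Perm (Fin n) =>
      cycleShift n k.1 * castSuccPerm n k.2 := by
  refine (Fintype.bijective_iff_injective_and_card _).2 ⟨?_, ?_⟩
  · rintro ⟨a, u⟩ ⟨b, v⟩ h
    have hab : a = b := by
      simpa using congrArg (fun σ : Perm (Fin (n + 1)) => σ (Fin.last n)) h
    subst hab
    simpa using castSuccPerm_injective (mul_left_cancel h)
  · simp [Fintype.card_perm, Nat.factorial_succ]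

variable {R : Type*} [CommRing R]

lemma det_groupMatrix_pow_toAdd_val (q : R) :
    det (groupMatrix fun a : Multiplicative (Fin (n + 1)) => q ^ (a.toAdd : ℕ)) =
      (1 - q ^ (n + 1)) ^ n := by
  rw [← det_submatrix_equiv_self Multiplicative.ofAdd, ← det_circulant_pow_val n q,
    ← det_transpose]
  congr 1
  ext i j
  simp [neg_add_eq_sub]

lemma prod_pow_factorial_div_succ (p : R) :
    ((1 - p ^ (n + 1)) ^ n) ^ n.factorial *
        (∏ k ∈ Finset.Icc 1 n, (1 - p ^ k) ^ (n.factorial / k * (k - 1))) ^ (n + 1) =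
      ∏ k ∈ Finset.Icc 1 (n + 1), (1 - p ^ k) ^ ((n + 1).factorial / k * (k - 1)) := by
  rw [Finset.prod_Icc_succ_top (by omega), ← Finset.prod_pow, mul_comm]
  congr 1
  · refine Finset.prod_congr rfl fun k hk => ?_
    obtain ⟨hk1, hkn⟩ := Finset.mem_Icc.1 hk
    obtain ⟨c, hc⟩ := Nat.dvd_factorial hk1 hkn
    rw [← pow_mul, Nat.factorial_succ, hc, mul_left_comm,
      Nat.mul_div_cancel_left _ (by omega), Nat.mul_div_cancel_left _ (by omega)]
    ring
  · rw [← pow_mul, Nat.factorial_succ, Nat.mul_div_cancel_left _ (by omega), Nat.add_sub_cancel,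
      mul_comm]

theorem det_groupMatrix_pow_pmaj (p : R) (n : ℕ) :
    det (groupMatrix fun w : Perm (Fin n) => p ^ pmaj w) =
      ∏ k ∈ Finset.Icc 1 n, (1 - p ^ k) ^ (n.factorial / k * (k - 1)) := by
  induction n with
  | zero => simp [pmaj]
  | succ n ih =>
    have hindex₁ : (cycleShift n).range.index = n.factorial := by
      have := MonoidHom.index_range_mul_card (cycleShift_injective (n := n))
      rw [Nat.card_eq_fintype_card, Nat.card_eq_fintype_card, Fintype.card_multiplicative,
        Fintype.card_fin, Fintype.card_perm, Fintype.card_fin, Nat.factorial_succ, mul_comm] at this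
      exact Nat.eq_of_mul_eq_mul_left n.succ_pos this
    have hindex₂ : (castSuccPerm n).range.index = n + 1 := by
      have := MonoidHom.index_range_mul_card (castSuccPerm_injective (n := n))
      rw [Nat.card_eq_fintype_card, Nat.card_eq_fintype_card, Fintype.card_perm,
        Fintype.card_perm, Fintype.card_fin, Fintype.card_fin, Nat.factorial_succ] at this
      exact Nat.eq_of_mul_eq_mul_right n.factorial_pos this
    rw [groupMatrix_eq_mul_of_bijective bijective_cycleShift_mul_castSuccPerm
        (fun a => p ^ (a.toAdd : ℕ)) (fun u => p ^ pmaj u)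
        fun a u => by rw [pmaj_cycleShift_mul _ (castSuccPerm_apply_last u),
          pmaj_castSuccPerm, pow_add],
      det_mul, det_groupMatrix_extend cycleShift_injective,
      det_groupMatrix_extend castSuccPerm_injective, det_groupMatrix_pow_toAdd_val, ih, hindex₁,
      hindex₂, prod_pow_factorial_div_succ]

lemma prod_pow_factorial_div_pow (p : R) (n c : ℕ) :
    (∏ k ∈ Finset.Icc 1 n, (1 - p ^ k) ^ (n.factorial / k * (k - 1))) ^ c =
      ∏ k ∈ Finset.Icc 2 n, (1 - p ^ k) ^ (n.factorial * c * (k - 1) / k) := by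
  rw [← Finset.prod_pow, ← Finset.prod_subset (Finset.Icc_subset_Icc_left one_le_two)]
  · refine Finset.prod_congr rfl fun k hk => ?_
    obtain ⟨hk2, hkn⟩ := Finset.mem_Icc.1 hk
    obtain ⟨d, hd⟩ := Nat.dvd_factorial (by omega) hkn
    rw [← pow_mul, hd, Nat.mul_div_cancel_left _ (by omega),
      show k * d * c * (k - 1) = k * (d * c * (k - 1)) by ring,
      Nat.mul_div_cancel_left _ (by omega)]
    ring_nf
  · intro k hk hk2
    obtain rfl : k = 1 := by simp at hk hk2; omega
    simp

end MajorIndex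

namespace ColoredPerm

lemma col_mul_inv {n m : ℕ} (g h : ColoredPerm n m) : col (g * h⁻¹) = ∑ i, (g.2 i - h.2 i).val := by
  rw [col, mul_def, inv_def, ← Equiv.sum_comp h.1⁻¹ fun j => (g.2 j - h.2 j).val]
  simp [sub_eq_add_neg]

open Matrix in
theorem det_pow_pmaj_mul_pow_col {R : Type*} [CommRing R] (p q : R) (n m : ℕ) [NeZero m] :
    det (of fun g h : ColoredPerm n m => p ^ pmaj (g * h⁻¹).1 * q ^ col (g * h⁻¹)) =
      (∏ k ∈ Finset.Icc 1 n, (1 - p ^ k) ^ (n.factorial / k * (k - 1))) ^ m ^ n *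
        ((1 - q ^ m) ^ (m - 1)) ^ (n * m ^ (n - 1) * n.factorial) := by
  let e : Equiv.Perm (Fin n) × (Fin n → ZMod m) ≃ ColoredPerm n m := Equiv.refl _
  have hkron : (of fun g h : ColoredPerm n m => p ^ pmaj (g * h⁻¹).1 * q ^ col (g * h⁻¹)).submatrix
      e e = kroneckerMap (· * ·) (of fun w v : Equiv.Perm (Fin n) => p ^ pmaj (w * v⁻¹))
        (of fun x y : Fin n → ZMod m =>
          ∏ i, circulant (fun a : ZMod m => q ^ a.val) (x i) (y i)) := by
    ext ⟨w, x⟩ ⟨v, y⟩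
    simp only [submatrix_apply, of_apply, kroneckerMap_apply, col_mul_inv, circulant_apply,
      Finset.prod_pow_eq_pow_sum]
    rfl
  rw [← det_submatrix_equiv_self e, hkron, det_kronecker,
    det_of_mul_inv fun w : Equiv.Perm (Fin n) => p ^ pmaj w, det_groupMatrix_pow_pmaj,
    det_of_prod_apply_pi, det_circulant_pow_zmod_val, ← pow_mul]
  simp [Fintype.card_perm]

end ColoredPerm

open ColoredPerm MvPolynomial in
theorem stmt17_general (n m : ℕ) [NeZero m] :
    Matrix.det (Matrix.of fun g h : ColoredPerm n m =>
        (X 0 : MvPolynomial (Fin 2) ℚ) ^ pmaj (g * h⁻¹).1 *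
          (X 1 : MvPolynomial (Fin 2) ℚ) ^ col (g * h⁻¹)) =
      (1 - (X 1 : MvPolynomial (Fin 2) ℚ) ^ m) ^
          (n.factorial * m ^ (n - 1) * (m - 1) * n) *
      ∏ k ∈ Finset.Icc 2 n,
        (1 - (X 0 : MvPolynomial (Fin 2) ℚ) ^ k) ^ (n.factorial * m ^ n * (k - 1) / k) := by
  rw [det_pow_pmaj_mul_pow_col, prod_pow_factorial_div_pow, mul_comm, ← pow_mul]
  congr 2
  ring

open ColoredPerm MvPolynomial in
/-- for all `m, n ≥ 1`, with `amaj(w,x) = maj(w)` and `col(w,x) = ∑|xᵢ|`,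
`det( p^{amaj(gh⁻¹)} q^{col(gh⁻¹)} )_{g,h ∈ Sₙᵐ}
  = (1-q^m)^{n! m^{n-1}(m-1)n} ⬝ ∏_{k=2}^n (1-p^k)^{n! mⁿ (k-1)/k}`. -/
theorem stmt17 (n m : ℕ) (hn : 1 ≤ n) (hm : 1 ≤ m) [NeZero m] :
    Matrix.det (Matrix.of fun g h : ColoredPerm n m =>
        (X 0 : MvPolynomial (Fin 2) ℚ) ^ pmaj (g * h⁻¹).1 *
          (X 1 : MvPolynomial (Fin 2) ℚ) ^ col (g * h⁻¹)) =
      (1 - (X 1 : MvPolynomial (Fin 2) ℚ) ^ m) ^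
          (n.factorial * m ^ (n - 1) * (m - 1) * n) *
      ∏ k ∈ Finset.Icc 2 n,
        (1 - (X 0 : MvPolynomial (Fin 2) ℚ) ^ k) ^ (n.factorial * m ^ n * (k - 1) / k) :=
  stmt17_general n m
end
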